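/- arXiv:1512.07025 — 10 statements merged into one kernel-verified Lean document; each statement's English description precedes it below -/
import Mathlib

section
/- Let W and Y be two sequences satisfying the same second-order recurrence: W = W(a₀,a₁) and Y = W(b₀,b₁). Then for all integers s, i, and j, one has W_{s+i}·Y_{s+j} − W_s·Y_{s+i+j} = (−c₂)^s · (W₁·Y_j − W₀·Y_{j+1}) · U_i. -/
/-!
Fix `j` and `s`. The Casoratian `W (n + 1) * Y n - W n * Y (n + 1)` of two solutions of
`f (n + 2) = c₁ f (n + 1) + c₂ f n` gets multiplied by `-c₂` at each step, so it equals
`(-c₂) ^ n` times its value at `0`; applied to `W` and the shifted solution `Y (j + ·)` this is the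
case `i = 1` of the identity. As functions of `i`, both sides of the identity solve the recurrence,
and they agree at `i = 0` and `i = 1`; since `c₂ ≠ 0` the recurrence can be run backwards, so a
solution on `ℤ` is determined by its values at `0` and `1`.
-/

def IsLinRec {R : Type*} [CommRing R] (c₁ c₂ : R) (f : ℤ → R) : Prop :=
  ∀ n, f (n + 2) = c₁ * f (n + 1) + c₂ * f n

theorem eq_zpow_mul_of_forall_add_one {K : Type*} [Field K] {r : K} (hr : r ≠ 0) {f : ℤ → K}
    (hf : ∀ n, f (n + 1) = r * f n) (n : ℤ) : f n = r ^ n * f 0 := by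
  induction n using Int.induction_on with
  | zero => simp
  | succ k ih => rw [hf, ih, zpow_add_one₀ hr, mul_comm _ r, mul_assoc]
  | pred k ih =>
    have h := hf (-k - 1)
    rw [sub_add_cancel, ih] at h
    rw [zpow_sub_one₀ hr]
    field_simp
    linear_combination -h

namespace IsLinRec

section CommRing

variable {R : Type*} [CommRing R] {c₁ c₂ : R} {f g : ℤ → R}

theorem of_forall_eq_sub (h : ∀ n, f n = c₁ * f (n - 1) + c₂ * f (n - 2)) : IsLinRec c₁ c₂ f :=
  fun n => by simpa [add_sub_assoc] using h (n + 2)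

theorem comp_const_add (hf : IsLinRec c₁ c₂ f) (m : ℤ) : IsLinRec c₁ c₂ (fun n => f (m + n)) :=
  fun n => by simpa only [add_assoc] using hf (m + n)

theorem sub (hf : IsLinRec c₁ c₂ f) (hg : IsLinRec c₁ c₂ g) : IsLinRec c₁ c₂ (fun n => f n - g n) :=
  fun n => by dsimp only; rw [hf, hg]; ring

theorem const_mul (hf : IsLinRec c₁ c₂ f) (a : R) : IsLinRec c₁ c₂ (fun n => a * f n) :=
  fun n => by dsimp only; rw [hf]; ring

theorem mul_const (hf : IsLinRec c₁ c₂ f) (a : R) : IsLinRec c₁ c₂ (fun n => f n * a) :=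
  fun n => by dsimp only; rw [hf]; ring

theorem casoratian_add_one (hf : IsLinRec c₁ c₂ f) (hg : IsLinRec c₁ c₂ g) (n : ℤ) :
    f (n + 1 + 1) * g (n + 1) - f (n + 1) * g (n + 1 + 1) =
      -c₂ * (f (n + 1) * g n - f n * g (n + 1)) := by
  rw [add_assoc n 1 1, one_add_one_eq_two, hf, hg]
  ring

theorem ext [IsDomain R] (hc₂ : c₂ ≠ 0) (hf : IsLinRec c₁ c₂ f) (hg : IsLinRec c₁ c₂ g)
    (h0 : f 0 = g 0) (h1 : f 1 = g 1) : f = g := by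
  suffices h : ∀ n : ℤ, f n = g n ∧ f (n + 1) = g (n + 1) from funext fun n => (h n).1
  intro n
  induction n using Int.induction_on with
  | zero => exact ⟨h0, by simpa using h1⟩
  | succ k ih =>
    refine ⟨ih.2, ?_⟩
    rw [add_assoc _ 1 1, one_add_one_eq_two, hf, hg, ih.1, ih.2]
  | pred k ih =>
    rw [sub_add_cancel]
    refine ⟨?_, ih.1⟩
    have hf' := hf (-k - 1)
    have hg' := hg (-k - 1)
    rw [show -(k : ℤ) - 1 + 2 = -k + 1 by ring, sub_add_cancel] at hf' hg'
    refine mul_left_cancel₀ hc₂ ?_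
    linear_combination hg' - hf' + ih.2 - c₁ * ih.1

end CommRing

theorem casoratian_eq {K : Type*} [Field K] {c₁ c₂ : K} (hc₂ : c₂ ≠ 0) {f g : ℤ → K}
    (hf : IsLinRec c₁ c₂ f) (hg : IsLinRec c₁ c₂ g) (n : ℤ) :
    f (n + 1) * g n - f n * g (n + 1) = (-c₂) ^ n * (f 1 * g 0 - f 0 * g 1) := by
  simpa using eq_zpow_mul_of_forall_add_one (neg_ne_zero.2 hc₂)
    (f := fun n => f (n + 1) * g n - f n * g (n + 1)) (casoratian_add_one hf hg) n

end IsLinRec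

theorem generalized_catalan_general (c₁ c₂ : ℝ) (hc₂ : c₂ ≠ 0)
    (W Y U : ℤ → ℝ)
    (hW : ∀ n : ℤ, W n = c₁ * W (n - 1) + c₂ * W (n - 2))
    (hY : ∀ n : ℤ, Y n = c₁ * Y (n - 1) + c₂ * Y (n - 2))
    (hU0 : U 0 = 0) (hU1 : U 1 = 1)
    (hU : ∀ n : ℤ, U n = c₁ * U (n - 1) + c₂ * U (n - 2)) :
    ∀ s i j : ℤ, W (s + i) * Y (s + j) - W s * Y (s + i + j) =
      (-c₂) ^ s * (W 1 * Y j - W 0 * Y (j + 1)) * U i := by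
  intro s i j
  have hW := IsLinRec.of_forall_eq_sub hW
  have hY := IsLinRec.of_forall_eq_sub hY
  have hU := IsLinRec.of_forall_eq_sub hU
  have hcas : W (s + 1) * Y (s + j) - W s * Y (s + j + 1) =
      (-c₂) ^ s * (W 1 * Y j - W 0 * Y (j + 1)) := by
    simpa only [add_zero, zero_add, add_comm j, add_assoc] using
      hW.casoratian_eq hc₂ (hY.comp_const_add j) s
  rw [add_right_comm s i j]
  refine congrFun (IsLinRec.ext hc₂ (f := fun i => W (s + i) * Y (s + j) - W s * Y (s + j + i))
    ?_ (hU.const_mul _) (by simp [hU0]) ?_) i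
  · exact ((hW.comp_const_add s).mul_const _).sub ((hY.comp_const_add (s + j)).const_mul _)
  · rw [hU1, mul_one, ← hcas]

/-- Generalized Catalan identity (Proposition 1):
`W_{s+i}·Y_{s+j} − W_s·Y_{s+i+j} = (−c₂)^s · (W₁·Y_j − W₀·Y_{j+1}) · U_i`. -/
theorem generalized_catalan (c₁ c₂ : ℝ) (hc₂ : c₂ ≠ 0)
    (a₀ a₁ b₀ b₁ : ℝ) (W Y U : ℤ → ℝ)
    (hW0 : W 0 = a₀) (hW1 : W 1 = a₁)
    (hW : ∀ n : ℤ, W n = c₁ * W (n - 1) + c₂ * W (n - 2))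
    (hY0 : Y 0 = b₀) (hY1 : Y 1 = b₁)
    (hY : ∀ n : ℤ, Y n = c₁ * Y (n - 1) + c₂ * Y (n - 2))
    (hU0 : U 0 = 0) (hU1 : U 1 = 1)
    (hU : ∀ n : ℤ, U n = c₁ * U (n - 1) + c₂ * U (n - 2)) :
    ∀ s i j : ℤ, W (s + i) * Y (s + j) - W s * Y (s + i + j) =
      (-c₂) ^ s * (W 1 * Y j - W 0 * Y (j + 1)) * U i :=
  generalized_catalan_general c₁ c₂ hc₂ W Y U hW hY hU0 hU1 hU
end

section
/- Let W = W(a₀,a₁) and Y = W(b₀,b₁) be two sequences satisfying the same second-order recurrence. Then for all integers s and j, one has W_{s+1}·Y_{s+j} − W_s·Y_{s+j+1} = (−c₂)^s · (W₁·Y_j − W₀·Y_{j+1}). -/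
/-!
The quantity `D s = W (s + 1) * Y (s + j) - W s * Y (s + j + 1)` (a Casoratian of `W` and a shift
of `Y`) satisfies `D (s + 1) = -c₂ * D s` by the recurrence, so it is a geometric sequence on `ℤ`
with ratio `-c₂`.
-/

theorem Int.eq_zpow_mul_of_forall_succ_eq_mul {G₀ : Type*} [CommGroupWithZero G₀]
    {f : ℤ → G₀} {r : G₀} (hf : ∀ t, f (t + 1) = r * f t) (s : ℤ) :
    f s = r ^ s * f 0 := by
  rcases eq_or_ne r 0 with rfl | hr
  · have hzero : ∀ t, f t = 0 := fun t => by simpa using hf (t - 1)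
    rw [hzero, hzero, mul_zero]
  induction s using Int.induction_on with
  | zero => simp
  | succ k ih => rw [hf, ih, zpow_add_one₀ hr]; ac_rfl
  | pred k ih =>
    have hstep := hf (-(k : ℤ) - 1)
    rw [sub_add_cancel, ih] at hstep
    rw [zpow_sub_one₀ hr, mul_right_comm, hstep, mul_comm r, mul_inv_cancel_right₀ hr]

section LinearRecurrence

variable {R : Type*} [CommRing R] {c₁ c₂ : R} {W Y : ℤ → R}

theorem recurrence_add_two (hW : ∀ n : ℤ, W n = c₁ * W (n - 1) + c₂ * W (n - 2)) (n : ℤ) :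
    W (n + 2) = c₁ * W (n + 1) + c₂ * W n := by
  simpa [add_sub_assoc] using hW (n + 2)

theorem shifted_casoratian_succ (hW : ∀ n : ℤ, W n = c₁ * W (n - 1) + c₂ * W (n - 2))
    (hY : ∀ n : ℤ, Y n = c₁ * Y (n - 1) + c₂ * Y (n - 2)) (j s : ℤ) :
    W (s + 1 + 1) * Y (s + 1 + j) - W (s + 1) * Y (s + 1 + j + 1) =
      -c₂ * (W (s + 1) * Y (s + j) - W s * Y (s + j + 1)) := by
  have hW' := recurrence_add_two hW s
  have hY' := recurrence_add_two hY (s + j)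
  rw [show s + 1 + 1 = s + 2 by ring, show s + 1 + j + 1 = s + j + 2 by ring,
    show s + 1 + j = s + j + 1 by ring, hW', hY']
  ring

end LinearRecurrence

theorem catalan_base_case_general (c₁ c₂ : ℝ)
    (W Y : ℤ → ℝ)
    (hW : ∀ n : ℤ, W n = c₁ * W (n - 1) + c₂ * W (n - 2))
    (hY : ∀ n : ℤ, Y n = c₁ * Y (n - 1) + c₂ * Y (n - 2)) :
    ∀ s j : ℤ, W (s + 1) * Y (s + j) - W s * Y (s + j + 1) =
      (-c₂) ^ s * (W 1 * Y j - W 0 * Y (j + 1)) := by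
  intro s j
  simpa using Int.eq_zpow_mul_of_forall_succ_eq_mul
    (f := fun s => W (s + 1) * Y (s + j) - W s * Y (s + j + 1))
    (shifted_casoratian_succ hW hY j) s

/-- Identity (5): `W_{s+1}·Y_{s+j} − W_s·Y_{s+j+1} = (−c₂)^s · (W₁·Y_j − W₀·Y_{j+1})`. -/
theorem catalan_base_case (c₁ c₂ : ℝ) (hc₂ : c₂ ≠ 0)
    (a₀ a₁ b₀ b₁ : ℝ) (W Y : ℤ → ℝ)
    (hW0 : W 0 = a₀) (hW1 : W 1 = a₁)
    (hW : ∀ n : ℤ, W n = c₁ * W (n - 1) + c₂ * W (n - 2))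
    (hY0 : Y 0 = b₀) (hY1 : Y 1 = b₁)
    (hY : ∀ n : ℤ, Y n = c₁ * Y (n - 1) + c₂ * Y (n - 2)) :
    ∀ s j : ℤ, W (s + 1) * Y (s + j) - W s * Y (s + j + 1) =
      (-c₂) ^ s * (W 1 * Y j - W 0 * Y (j + 1)) :=
  catalan_base_case_general c₁ c₂ W Y hW hY
end

section
/- Let W = W(a,b) be a sequence satisfying the second-order recurrence, with discriminant Δ = b² − c₁·a·b − c₂·a². Then for all integers k, n, r, s, and t, one has W_{−kr} · W_{s+k(n+t)} = W_{k(t−r)} · W_{s+kn} − (−c₂)^{−kr} · Δ · U_{kt} · U_{s+k(n+r)}. -/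
/-!
Everything follows from uniqueness: a solution of the recurrence on `ℤ` is determined by two
consecutive values. Both sides of `X 0 * X (m + j) - X m * X j = -(Δ * U m * U j)` solve the
recurrence in `m`, so it suffices to check `m = 0, 1`; for `m = 1` both sides solve it in `j`,
and `j = 0, 1` are immediate. The general identity is this one for the shifted sequence
`n ↦ X (n + x)`, whose discriminant is `(-c₂) ^ x * Δ` since the discriminant is multiplied by
`-c₂` under each unit shift.
-/

def IsHoradam {R : Type*} [CommRing R] (c₁ c₂ : R) (X : ℤ → R) : Prop :=
  ∀ n, X (n + 2) = c₁ * X (n + 1) + c₂ * X n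

def horadamDisc {R : Type*} [CommRing R] (c₁ c₂ : R) (X : ℤ → R) : R :=
  X 1 ^ 2 - c₁ * X 0 * X 1 - c₂ * X 0 ^ 2

theorem eq_zpow_mul_of_forall_add_one_s5 {K : Type*} [Field K] {q : K} (hq : q ≠ 0) {e : ℤ → K}
    (h : ∀ n, e (n + 1) = q * e n) (n : ℤ) : e n = q ^ n * e 0 := by
  induction n using Int.induction_on with
  | zero => simp
  | succ i ih => rw [h, ih, zpow_add_one₀ hq]; ring
  | pred i ih =>
    have hi := h (-i - 1)
    rw [sub_add_cancel, ih] at hi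
    apply mul_left_cancel₀ hq
    rw [← hi, zpow_sub_one₀ hq]
    field_simp

namespace IsHoradam

section CommRing

variable {R : Type*} [CommRing R] {c₁ c₂ : R} {X Y : ℤ → R}

theorem of_eq_sub (h : ∀ n, X n = c₁ * X (n - 1) + c₂ * X (n - 2)) : IsHoradam c₁ c₂ X := by
  intro n
  simpa [show n + 2 - 1 = n + 1 by ring] using h (n + 2)

theorem shift (hX : IsHoradam c₁ c₂ X) (k : ℤ) : IsHoradam c₁ c₂ (fun n => X (n + k)) := by
  intro n
  simpa only [add_right_comm n _ k] using hX (n + k)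

theorem neg (hX : IsHoradam c₁ c₂ X) : IsHoradam c₁ c₂ (fun n => -X n) :=
  fun n => by linear_combination -hX n

theorem sub (hX : IsHoradam c₁ c₂ X) (hY : IsHoradam c₁ c₂ Y) :
    IsHoradam c₁ c₂ (fun n => X n - Y n) :=
  fun n => by linear_combination hX n - hY n

theorem const_mul (hX : IsHoradam c₁ c₂ X) (a : R) : IsHoradam c₁ c₂ (fun n => a * X n) :=
  fun n => by linear_combination a * hX n

theorem mul_const (hX : IsHoradam c₁ c₂ X) (a : R) : IsHoradam c₁ c₂ (fun n => X n * a) :=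
  fun n => by linear_combination a * hX n

theorem ext [IsDomain R] (hc₂ : c₂ ≠ 0) (hX : IsHoradam c₁ c₂ X) (hY : IsHoradam c₁ c₂ Y)
    (h0 : X 0 = Y 0) (h1 : X 1 = Y 1) : X = Y := by
  suffices h : ∀ n, X n = Y n ∧ X (n + 1) = Y (n + 1) from funext fun n => (h n).1
  intro n
  induction n using Int.induction_on with
  | zero => exact ⟨h0, h1⟩
  | succ i ih =>
    refine ⟨ih.2, ?_⟩
    rw [add_assoc, one_add_one_eq_two, hX, hY, ih.1, ih.2]
  | pred i ih =>
    have hXi := hX (-i - 1)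
    have hYi := hY (-i - 1)
    rw [show -(i : ℤ) - 1 + 2 = -i + 1 by ring, sub_add_cancel] at hXi hYi
    refine ⟨mul_left_cancel₀ hc₂ ?_, by rw [sub_add_cancel, ih.1]⟩
    linear_combination hYi - hXi + ih.2 - c₁ * ih.1

end CommRing

variable {K : Type*} [Field K] {c₁ c₂ : K} {X U : ℤ → K}

theorem horadamDisc_shift (hc₂ : c₂ ≠ 0) (hX : IsHoradam c₁ c₂ X) (k : ℤ) :
    horadamDisc c₁ c₂ (fun n => X (n + k)) = (-c₂) ^ k * horadamDisc c₁ c₂ X := by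
  have hstep (i : ℤ) : horadamDisc c₁ c₂ (fun n => X (n + (i + 1))) =
      -c₂ * horadamDisc c₁ c₂ (fun n => X (n + i)) := by
    simp only [horadamDisc]
    linear_combination (norm := ring_nf) (X (i + 2) + c₂ * X i) * hX i
  simpa using eq_zpow_mul_of_forall_add_one_s5 (neg_ne_zero.mpr hc₂)
    (e := fun k => horadamDisc c₁ c₂ (fun n => X (n + k))) hstep k

theorem mul_add_one_sub_mul (hc₂ : c₂ ≠ 0) (hX : IsHoradam c₁ c₂ X) (hU : IsHoradam c₁ c₂ U)
    (hU0 : U 0 = 0) (hU1 : U 1 = 1) (j : ℤ) :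
    X 0 * X (j + 1) - X 1 * X j = -(horadamDisc c₁ c₂ X * U j) := by
  refine congrFun (ext hc₂ (((hX.shift 1).const_mul _).sub (hX.const_mul _))
    (hU.const_mul _).neg ?_ ?_) j
  · simp only [zero_add, hU0, mul_zero, neg_zero]; ring
  · have hX2 : X 2 = c₁ * X 1 + c₂ * X 0 := by simpa using hX 0
    simp only [horadamDisc, hU1, one_add_one_eq_two]
    linear_combination X 0 * hX2

theorem mul_add_sub_mul_at_zero (hc₂ : c₂ ≠ 0) (hX : IsHoradam c₁ c₂ X)
    (hU : IsHoradam c₁ c₂ U) (hU0 : U 0 = 0) (hU1 : U 1 = 1) (m j : ℤ) :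
    X 0 * X (m + j) - X m * X j = -(horadamDisc c₁ c₂ X * U m * U j) := by
  refine congrFun (ext hc₂ (((hX.shift j).const_mul _).sub (hX.mul_const _))
    ((hU.const_mul _).mul_const _).neg ?_ ?_) m
  · simp [hU0]
  · simpa [hU1, add_comm 1 j] using mul_add_one_sub_mul hc₂ hX hU hU0 hU1 j

theorem mul_add_sub_mul (hc₂ : c₂ ≠ 0) (hX : IsHoradam c₁ c₂ X) (hU : IsHoradam c₁ c₂ U)
    (hU0 : U 0 = 0) (hU1 : U 1 = 1) (x m j : ℤ) :
    X x * X (m + j + x) - X (m + x) * X (j + x) =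
      -((-c₂) ^ x * horadamDisc c₁ c₂ X * U m * U j) := by
  have h := mul_add_sub_mul_at_zero hc₂ (hX.shift x) hU hU0 hU1 m j
  rwa [horadamDisc_shift hc₂ hX, zero_add] at h

end IsHoradam

/-- Corollary 2 (cleared of denominators):
`W_{−kr} · W_{s+k(n+t)} = W_{k(t−r)} · W_{s+kn} − (−c₂)^{−kr} · Δ · U_{kt} · U_{s+k(n+r)}`. -/
theorem corollary_shift (c₁ c₂ : ℝ) (hc₂ : c₂ ≠ 0)
    (a b : ℝ) (W U : ℤ → ℝ)
    (hW0 : W 0 = a) (hW1 : W 1 = b)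
    (hW : ∀ n : ℤ, W n = c₁ * W (n - 1) + c₂ * W (n - 2))
    (hU0 : U 0 = 0) (hU1 : U 1 = 1)
    (hU : ∀ n : ℤ, U n = c₁ * U (n - 1) + c₂ * U (n - 2)) :
    ∀ k n r s t : ℤ, W (-(k * r)) * W (s + k * (n + t)) =
      W (k * (t - r)) * W (s + k * n) -
        (-c₂) ^ (-(k * r)) * (b ^ 2 - c₁ * a * b - c₂ * a ^ 2) *
          U (k * t) * U (s + k * (n + r)) := by
  intro k n r s t
  have h := (IsHoradam.of_eq_sub hW).mul_add_sub_mul hc₂ (IsHoradam.of_eq_sub hU) hU0 hU1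
    (-(k * r)) (k * t) (s + k * (n + r))
  rw [horadamDisc, hW0, hW1] at h
  linear_combination (norm := ring_nf) h
end

section
/- Let r be a natural number and let c₀, …, c_r and x₀, …, x_r be real numbers. Then the determinant of the (r+1)×(r+1) matrix whose (i,j) entry (0 ≤ i, j ≤ r) is (c_j·x_i + 1)^r equals ∏_{0 ≤ i < j ≤ r} (x_i − x_j) · ∏_{0 ≤ i < j ≤ r} (c_i − c_j) · ∏_{i=0}^{r} C(r,i), where C(r,i) denotes the binomial coefficient. -/
open Finset

/-! The matrix factors as `V(x) · diag (C(r,k))_k · V(c)ᵀ` with `V` the Vandermonde matrix, by the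
binomial expansion `(c_j x_i + 1)^r = ∑_k x_i^k C(r,k) c_j^k`. Taking determinants leaves the two
Vandermonde determinants, whose orientation `∏_{i<j} (v_j − v_i)` differs from the stated one by
the same sign in both factors. -/

namespace Matrix

variable {R : Type*} [CommRing R]

theorem of_mul_add_one_pow_eq_vandermonde_mul (n : ℕ) (c x : Fin (n + 1) → R) :
    of (fun i j => (c j * x i + 1) ^ n) =
      vandermonde x * diagonal (fun k : Fin (n + 1) => (n.choose k : R)) * (vandermonde c)ᵀ := by
  ext i j
  simp only [mul_apply, diagonal_apply, transpose_apply, vandermonde_apply, of_apply,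
    mul_ite, mul_zero, sum_ite_eq', mem_univ, if_true]
  rw [add_pow, ← Fin.sum_univ_eq_sum_range]
  refine sum_congr rfl fun k _ => ?_
  simp only [one_pow, mul_one, mul_pow]
  ring

end Matrix

theorem Finset.prod_prod_Ioi_sub_mul_prod_prod_Ioi_sub {R : Type*} [CommRing R] {m : ℕ}
    (a b : Fin m → R) :
    (∏ i, ∏ j ∈ Ioi i, (a i - a j)) * ∏ i, ∏ j ∈ Ioi i, (b i - b j) =
      (∏ i, ∏ j ∈ Ioi i, (a j - a i)) * ∏ i, ∏ j ∈ Ioi i, (b j - b i) := by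
  simp only [← prod_mul_distrib]
  exact prod_congr rfl fun i _ => prod_congr rfl fun j _ => by ring

/-- Lemma 4: `det((c_j·x_i + 1)^r) = ∏_{i<j}(x_i − x_j) · ∏_{i<j}(c_i − c_j) · ∏ᵢ C(r,i)`. -/
theorem det_powers_linear (r : ℕ) (c x : Fin (r + 1) → ℝ) :
    Matrix.det (Matrix.of fun i j : Fin (r + 1) => (c j * x i + 1) ^ r) =
      (∏ i : Fin (r + 1), ∏ j ∈ Finset.Ioi i, (x i - x j)) *
      (∏ i : Fin (r + 1), ∏ j ∈ Finset.Ioi i, (c i - c j)) *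
      ∏ i ∈ Finset.range (r + 1), (r.choose i : ℝ) := by
  rw [Matrix.of_mul_add_one_pow_eq_vandermonde_mul, Matrix.det_mul, Matrix.det_mul,
    Matrix.det_transpose, Matrix.det_diagonal, Matrix.det_vandermonde, Matrix.det_vandermonde,
    prod_prod_Ioi_sub_mul_prod_prod_Ioi_sub, ← Fin.prod_univ_eq_prod_range]
  ring
end

section
/- Let r be a natural number and let A(0), …, A(r), B(0), …, B(r), X₀, …, X_r, Y₀, …, Y_r be real numbers. Then the determinant of the (r+1)×(r+1) matrix whose (i,j) entry (0 ≤ i, j ≤ r) is (A(j)·X_i + B(j)·Y_i)^r equals ∏_{0 ≤ i < j ≤ r} (X_i·Y_j − X_j·Y_i) · ∏_{0 ≤ i < j ≤ r} (A(i)·B(j) − A(j)·B(i)) · ∏_{i=0}^{r} C(r,i), where C(r,i) denotes the binomial coefficient. -/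
/-!
By the binomial theorem the matrix factors as `V(X, Y) · diag (C(r, k)) · V(A, B)ᵀ`, where
`V(v, w)` is the homogeneous Vandermonde matrix `(v i ^ k * w i ^ (r - k))`, whose determinant
is the product of the `2 × 2` minors `v j * w i - v i * w j` over `i < j`.
-/

open Finset Matrix

namespace Matrix

variable {R : Type*} [CommRing R]

theorem of_add_pow_eq_projVandermonde_mul (n : ℕ) (a b x y : Fin (n + 1) → R) :
    of (fun i j => (a j * x i + b j * y i) ^ n) =
      projVandermonde x y * diagonal (fun k : Fin (n + 1) => (n.choose k : R)) *
        (projVandermonde a b)ᵀ := by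
  ext i j
  rw [mul_apply]
  simp only [mul_diagonal, transpose_apply, projVandermonde_apply, Fin.val_rev, of_apply]
  rw [add_pow, ← Fin.sum_univ_eq_sum_range]
  refine sum_congr rfl fun k _ => ?_
  rw [show n + 1 - (k + 1) = n - k by omega]
  ring

theorem det_of_add_pow (n : ℕ) (a b x y : Fin (n + 1) → R) :
    det (of fun i j => (a j * x i + b j * y i) ^ n) =
      (∏ i : Fin (n + 1), ∏ j ∈ Ioi i, (x i * y j - x j * y i)) *
      (∏ i : Fin (n + 1), ∏ j ∈ Ioi i, (a i * b j - a j * b i)) *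
      ∏ k : Fin (n + 1), (n.choose k : R) := by
  rw [of_add_pow_eq_projVandermonde_mul, det_mul, det_mul, det_transpose, det_diagonal,
    det_projVandermonde, det_projVandermonde, mul_right_comm]
  congr 1
  -- both products change sign by the same factor `(-1) ^ #{i < j}`
  simp only [← prod_mul_distrib]
  exact prod_congr rfl fun i _ => prod_congr rfl fun j _ => by ring

end Matrix

/-- Corollary 5: `det((A(j)·X_i + B(j)·Y_i)^r)
  = ∏_{i<j}(X_i·Y_j − X_j·Y_i) · ∏_{i<j}(A(i)·B(j) − A(j)·B(i)) · ∏ᵢ C(r,i)`. -/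
theorem det_powers_bilinear (r : ℕ) (A B X Y : Fin (r + 1) → ℝ) :
    Matrix.det (Matrix.of fun i j : Fin (r + 1) => (A j * X i + B j * Y i) ^ r) =
      (∏ i : Fin (r + 1), ∏ j ∈ Finset.Ioi i, (X i * Y j - X j * Y i)) *
      (∏ i : Fin (r + 1), ∏ j ∈ Finset.Ioi i, (A i * B j - A j * B i)) *
      ∏ i ∈ Finset.range (r + 1), (r.choose i : ℝ) := by
  rw [det_of_add_pow, Fin.prod_univ_eq_prod_range (fun k => (r.choose k : ℝ))]
end

section
/- For integers r ≥ 0, s, k, and n, the determinant of the (r+1)×(r+1) matrix whose (i,j) entry (0 ≤ i, j ≤ r) is F_{s+k(n+i+j)}^r equals (−1)^{(s+kn+1)·C(r+1,2)} · (∏_{i=1}^{r} F_{ik}^{r+1−i})² · ∏_{i=0}^{r} C(r,i). -/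
/-!
Put `a = s + k n`. The addition formula `F (m + t) = F m F (t + 1) + F (m - 1) F t` writes the
entry as `(x i * u j + y i * v j) ^ r` with `x i = F (a + i k)`, `y i = F (a + i k - 1)`,
`u j = F (j k + 1)`, `v j = F (j k)`. By the binomial theorem such a matrix is
`P(x, y) * diag (C(r, l)) * P(u, v)ᵀ`, where `P` is the homogeneous Vandermonde matrix with
determinant `∏_{i < j} (x j * y i - x i * y j)`. By d'Ocagne's identity
`F m F (t - 1) - F (m - 1) F t = (-1) ^ t F (m - t)`, the two factors attached to a pair `i < j`
are `±F ((j - i) k)`, with signs multiplying to `(-1) ^ (a + 1)`.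
-/

open Finset

section FibRec

variable {R : Type*} [CommRing R]

def IsFibRec (G : ℤ → R) : Prop :=
  ∀ n, G (n + 2) = G (n + 1) + G n

namespace IsFibRec

variable {G H : ℤ → R}

theorem eq_of_apply_zero_of_apply_one (hG : IsFibRec G) (hH : IsFibRec H) (h0 : G 0 = H 0)
    (h1 : G 1 = H 1) : G = H := by
  suffices ∀ n : ℤ, G n = H n ∧ G (n + 1) = H (n + 1) from funext fun n => (this n).1
  intro n
  induction n using Int.induction_on with
  | zero => exact ⟨h0, h1⟩
  | succ n ih => exact ⟨ih.2, by rw [add_assoc, one_add_one_eq_two, hG, hH, ih.1, ih.2]⟩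
  | pred n ih =>
    refine ⟨?_, by rw [sub_add_cancel]; exact ih.1⟩
    have hG' := hG (-n - 1)
    have hH' := hH (-n - 1)
    rw [show -(n : ℤ) - 1 + 2 = -n + 1 by ring, show -(n : ℤ) - 1 + 1 = -n by ring] at hG' hH'
    linear_combination hH' - hG' + ih.2 - ih.1

theorem add (hG : IsFibRec G) (hH : IsFibRec H) : IsFibRec (fun n => G n + H n) :=
  fun n => by simp only [hG n, hH n]; ring

theorem sub (hG : IsFibRec G) (hH : IsFibRec H) : IsFibRec (fun n => G n - H n) :=
  fun n => by simp only [hG n, hH n]; ring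

theorem const_mul (hG : IsFibRec G) (c : R) : IsFibRec (fun n => c * G n) :=
  fun n => by simp only [hG n]; ring

theorem comp_add_right (hG : IsFibRec G) (m : ℤ) : IsFibRec (fun n => G (n + m)) :=
  fun n => by simpa only [add_right_comm n _ m] using hG (n + m)

theorem comp_add_left (hG : IsFibRec G) (m : ℤ) : IsFibRec (fun n => G (m + n)) :=
  fun n => by simpa only [add_comm m, add_right_comm n _ m] using hG (n + m)

theorem neg_one_zpow_mul_comp_sub (hG : IsFibRec G) (m : ℤ) :
    IsFibRec (fun n => ((-1 : Rˣ) ^ n : Rˣ) * G (m - n)) := by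
  intro n
  have h := hG (m - (n + 2))
  have e2 : (((-1 : Rˣ) ^ (n + 2) : Rˣ) : R) = ((-1 : Rˣ) ^ n : Rˣ) := by simp [zpow_add]
  have e1 : (((-1 : Rˣ) ^ (n + 1) : Rˣ) : R) = -((-1 : Rˣ) ^ n : Rˣ) := by simp [zpow_add]
  rw [show m - (n + 2) + 2 = m - n by ring, show m - (n + 2) + 1 = m - (n + 1) by ring] at h
  simp only [e1, e2]
  linear_combination -(((-1 : Rˣ) ^ n : Rˣ) : R) * h

variable {F : ℤ → R}

-- In both identities, the two sides solve the recurrence in `t` and agree at `t = 0, 1`.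
theorem apply_add (hG : IsFibRec G) (hF : IsFibRec F) (hF0 : F 0 = 0) (hF1 : F 1 = 1)
    (m t : ℤ) : G (m + t) = G m * F (t + 1) + G (m - 1) * F t := by
  have hF2 : F 2 = 1 := by simpa [hF0, hF1] using hF 0
  have hGm : G (m + 1) = G m + G (m - 1) := by
    simpa only [show m - 1 + 2 = m + 1 by ring, sub_add_cancel] using hG (m - 1)
  refine congrFun ((hG.comp_add_left m).eq_of_apply_zero_of_apply_one
    (((hF.comp_add_right 1).const_mul (G m)).add (hF.const_mul (G (m - 1)))) ?_ ?_) t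
  · simp [hF0, hF1]
  · simp [hF1, hF2, hGm]

theorem docagne (hG : IsFibRec G) (hF : IsFibRec F) (hF0 : F 0 = 0) (hF1 : F 1 = 1)
    (m t : ℤ) : G m * F (t - 1) - G (m - 1) * F t = ((-1 : Rˣ) ^ t : Rˣ) * G (m - t) := by
  have hFm1 : F (-1) = 1 := by
    have := hF (-1)
    norm_num [hF0, hF1] at this
    linear_combination -this
  have hlhs := ((hF.comp_add_right (-1)).const_mul (G m)).sub (hF.const_mul (G (m - 1)))
  refine congrFun (hlhs.eq_of_apply_zero_of_apply_one (hG.neg_one_zpow_mul_comp_sub m) ?_ ?_) t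
  · simp [hF0, hFm1]
  · simp [hF0, hF1]

theorem docagne_mul_docagne (hF : IsFibRec F) (hF0 : F 0 = 0) (hF1 : F 1 = 1) (a p q : ℤ) :
    (F (a + q) * F (a + p - 1) - F (a + p) * F (a + q - 1)) *
        (F (q + 1) * F p - F (p + 1) * F q) =
      ((-1 : Rˣ) ^ (a + 1) : Rˣ) * F (q - p) ^ 2 := by
  have hx := hF.docagne hF hF0 hF1 (a + q) (a + p)
  have hu := hF.docagne hF hF0 hF1 (q + 1) (p + 1)
  simp only [add_sub_add_left_eq_sub, add_sub_cancel_right, add_sub_add_right_eq_sub] at hx hu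
  have hsign : (-1 : Rˣ) ^ (a + p) * (-1 : Rˣ) ^ (p + 1) = (-1 : Rˣ) ^ (a + 1) := by
    rw [← zpow_add, show a + p + (p + 1) = a + 1 + 2 * p by ring, zpow_add, zpow_mul]
    simp
  rw [← hsign, Units.val_mul]
  linear_combination (F (q + 1) * F p - F (p + 1) * F q) * hx +
    (((-1 : Rˣ) ^ (a + p) : Rˣ) : R) * F (q - p) * hu

end IsFibRec

end FibRec

namespace Fin

variable {M : Type*} [CommMonoid M]

theorem prod_Ioi_const (n : ℕ) (c : M) : ∏ i : Fin n, ∏ _j ∈ Ioi i, c = c ^ n.choose 2 := by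
  have hcard := Fintype.card_product_filter_lt (α := Fin n)
  rw [Fintype.card_fin, card_filter, Fintype.sum_prod_type] at hcard
  simp only [Finset.prod_const, prod_pow_eq_pow_sum]
  congr 1
  simpa [filter_lt_eq_Ioi] using hcard

theorem prod_Ioi_sub (g : ℤ → M) (r : ℕ) :
    ∏ i : Fin (r + 1), ∏ j ∈ Ioi i, g (j - i) = ∏ d ∈ Icc 1 r, g d ^ (r + 1 - d) := by
  induction r with
  | zero => simp
  | succ r ih =>
    have hfirst : ∏ j : Fin (r + 1), g (j + 1) = ∏ d ∈ Icc 1 (r + 1), g d := by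
      rw [prod_univ_eq_prod_range (fun j : ℕ => g (j + 1)), ← Ico_add_one_right_eq_Icc,
        prod_Ico_eq_prod_range]
      simp [add_comm]
    rw [prod_univ_succ, prod_Ioi_zero]
    simp only [prod_Ioi_succ, val_succ, val_zero, Nat.cast_succ, Nat.cast_zero, sub_zero,
      add_sub_add_right_eq_sub, ih, hfirst]
    rw [prod_Icc_succ_top (by omega), prod_Icc_succ_top (by omega), Nat.add_sub_cancel_left,
      pow_one, mul_right_comm, ← prod_mul_distrib]
    congr 1
    refine prod_congr rfl fun d hd => ?_
    rw [← pow_succ', Nat.sub_add_comm ((mem_Icc.mp hd).2.trans r.le_succ)]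

end Fin

namespace Matrix

variable {R : Type*} [CommRing R]

theorem of_add_mul_pow_eq (r : ℕ) (x y u v : Fin (r + 1) → R) :
    of (fun i j => (x i * u j + y i * v j) ^ r) =
      projVandermonde x y * diagonal (fun l : Fin (r + 1) => (r.choose l : R)) *
        (projVandermonde u v)ᵀ := by
  ext i j
  simp only [of_apply, mul_apply, diagonal_apply, transpose_apply, projVandermonde_apply,
    mul_ite, mul_zero, sum_ite_eq', mem_univ, if_true, add_pow]
  rw [← Fin.sum_univ_eq_sum_range (fun l => (x i * u j) ^ l * (y i * v j) ^ (r - l) * r.choose l)]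
  refine sum_congr rfl fun l _ => ?_
  rw [Fin.val_rev, Nat.add_sub_add_right]
  ring

theorem det_of_add_mul_pow (r : ℕ) (x y u v : Fin (r + 1) → R) :
    det (of fun i j => (x i * u j + y i * v j) ^ r) =
      (∏ l ∈ range (r + 1), (r.choose l : R)) * det (projVandermonde x y) *
        det (projVandermonde u v) := by
  rw [of_add_mul_pow_eq, det_mul, det_mul, det_diagonal, det_transpose,
    Fin.prod_univ_eq_prod_range (fun l => (r.choose l : R))]
  ring

end Matrix

/-- Formula (2): `det(F_{s+k(n+i+j)}^r) = (−1)^{(s+kn+1)C(r+1,2)} ·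
(∏_{i=1}^{r} F_{ik}^{r+1−i})² · ∏ᵢ C(r,i)` for the Fibonacci numbers
extended to all integers. -/
theorem det_powers_fib_general (F : ℤ → ℤ)
    (hF0 : F 0 = 0) (hF1 : F 1 = 1)
    (hF : ∀ n : ℤ, F n = F (n - 1) + F (n - 2))
    (r : ℕ) (s k n : ℤ) :
    Matrix.det (Matrix.of fun i j : Fin (r + 1) =>
        F (s + k * (n + (i : ℤ) + (j : ℤ))) ^ r) =
      ((-1 : ℤˣ) ^ ((s + k * n + 1) * ((r + 1).choose 2 : ℤ)) : ℤˣ) *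
      (∏ i ∈ Finset.Icc 1 r, F ((i : ℤ) * k) ^ (r + 1 - i)) ^ 2 *
      ∏ i ∈ Finset.range (r + 1), (r.choose i : ℤ) := by
  have hrec : IsFibRec F := fun m => by
    simpa only [add_sub_cancel_right, show m + 2 - 1 = m + 1 by ring] using hF (m + 2)
  have hentries : (Matrix.of fun i j : Fin (r + 1) => F (s + k * (n + i + j)) ^ r) =
      Matrix.of fun i j : Fin (r + 1) =>
        (F (s + k * n + i * k) * F (j * k + 1) + F (s + k * n + i * k - 1) * F (j * k)) ^ r := by
    ext i j
    rw [Matrix.of_apply, Matrix.of_apply, ← hrec.apply_add hrec hF0 hF1]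
    congr 2
    ring
  rw [hentries, Matrix.det_of_add_mul_pow, Matrix.det_projVandermonde,
    Matrix.det_projVandermonde, mul_assoc, ← prod_mul_distrib]
  simp_rw [← prod_mul_distrib, hrec.docagne_mul_docagne hF0 hF1, ← sub_mul, prod_mul_distrib,
    prod_pow]
  rw [Fin.prod_Ioi_const, Fin.prod_Ioi_sub (fun d => F (d * k)), zpow_mul, zpow_natCast,
    Units.val_pow_eq_pow_val]
  ring
end

section
/- For all natural numbers r and n, the determinant of the (r+1)×(r+1) matrix whose (i,j) entry (0 ≤ i, j ≤ r) is F_{n+i+j}^r equals (−1)^{(n+1)·C(r+1,2)} · (F₁^r·F₂^{r−1}⋯F_r)² · ∏_{i=0}^{r} C(r,i), i.e., (−1)^{(n+1)·C(r+1,2)} · (∏_{i=1}^{r} F_i^{r+1−i})² · ∏_{i=0}^{r} C(r,i). -/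
/-!
By the binomial theorem, `(a^m - b^m)^r = ∑ₖ (-1)^(r-k) C(r,k) xₖ^m` with `xₖ = a^k b^(r-k)`, so the
Hankel matrix `((a^(n+i+j) - b^(n+i+j))^r)` factors as `Vᵀ D V`, where `V` is the Vandermonde matrix
of the nodes `xₖ` and `D` is diagonal. Its determinant is `det D · (det V)²`, and the factorisation
`xⱼ - xᵢ = a^i b^(r-j) (a^(j-i) - b^(j-i))` makes `det V` a product of the numbers `a^d - b^d`.
Binet's formula `(φ - ψ) F_m = φ^m - ψ^m` and `φψ = -1` then give Carlitz's determinant.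
-/

open Finset Matrix

section DoubleProducts

variable {M : Type*} [CommMonoid M] (r : ℕ)

lemma sum_range_succ_id_eq_choose_two : ∑ k ∈ range (r + 1), k = (r + 1).choose 2 := by
  rw [sum_range_id, Nat.choose_two_right]

lemma sum_range_succ_sub_eq_choose_two : ∑ k ∈ range (r + 1), (r - k) = (r + 1).choose 2 := by
  rw [← sum_range_succ_id_eq_choose_two, ← sum_range_reflect (fun k => k)]
  simp

lemma prod_fin_Ioi_eq_prod_range_Ioc (g : ℕ → ℕ → M) :
    ∏ i : Fin (r + 1), ∏ j ∈ Ioi i, g i j = ∏ i ∈ range (r + 1), ∏ j ∈ Ioc i r, g i j := by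
  rw [← Fin.prod_univ_eq_prod_range (fun i => ∏ j ∈ Ioc i r, g i j)]
  refine prod_congr rfl fun i _ => ?_
  rw [← Ioo_add_one_right_eq_Ioc, ← Fin.map_valEmbedding_Ioi, prod_map]
  rfl

lemma prod_range_prod_Ioc_left (f : ℕ → M) :
    ∏ i ∈ range (r + 1), ∏ _j ∈ Ioc i r, f i = ∏ i ∈ range (r + 1), f i ^ (r - i) := by
  simp only [prod_const, Nat.card_Ioc]

lemma prod_range_prod_Ioc_right (f : ℕ → M) :
    ∏ i ∈ range (r + 1), ∏ j ∈ Ioc i r, f j = ∏ j ∈ range (r + 1), f j ^ j := by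
  rw [prod_comm' (t' := range (r + 1)) (s' := range)
    (by intro i j; simp only [mem_range, mem_Ioc]; omega)]
  simp only [prod_const, card_range]

lemma prod_range_prod_Ioc_sub (g : ℕ → M) :
    ∏ i ∈ range (r + 1), ∏ j ∈ Ioc i r, g (j - i) = ∏ d ∈ Icc 1 r, g d ^ (r + 1 - d) := by
  have shift (i : ℕ) (hi : i ≤ r) : ∏ j ∈ Ioc i r, g (j - i) = ∏ d ∈ Icc 1 (r - i), g d := by
    obtain ⟨m, rfl⟩ := Nat.exists_eq_add_of_le hi
    rw [← Icc_add_one_left_eq_Ioc, ← map_add_left_Icc, prod_map, Nat.add_sub_cancel_left]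
    simp
  rw [prod_congr rfl fun i hi => shift i (Nat.lt_succ_iff.mp (mem_range.mp hi)),
    prod_comm' (t' := Icc 1 r) (s' := fun d => range (r + 1 - d))
      (by intro i d; simp only [mem_range, mem_Icc]; omega)]
  simp only [prod_const, card_range]

end DoubleProducts

section PowSubPow

variable {R : Type*} [CommRing R] (a b : R) (r : ℕ)

def powMulPow (k : ℕ) : R := a ^ k * b ^ (r - k)

lemma pow_sub_pow_pow_eq_sum (m : ℕ) :
    (a ^ m - b ^ m) ^ r =
      ∑ k ∈ range (r + 1), (-1) ^ (r - k) * r.choose k * powMulPow a b r k ^ m := by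
  rw [sub_eq_add_neg, add_pow]
  refine sum_congr rfl fun k _ => ?_
  rw [powMulPow, neg_pow]
  ring

lemma hankel_pow_sub_pow_eq_mul (n : ℕ) :
    (of fun i j : Fin (r + 1) => (a ^ (n + i + j) - b ^ (n + i + j)) ^ r) =
      (vandermonde fun k : Fin (r + 1) => powMulPow a b r k)ᵀ *
        diagonal (fun k : Fin (r + 1) =>
          (-1) ^ (r - k) * r.choose k * powMulPow a b r k ^ n) *
        vandermonde fun k : Fin (r + 1) => powMulPow a b r k := by
  ext i j
  rw [of_apply, pow_sub_pow_pow_eq_sum, ← Fin.sum_univ_eq_sum_range, mul_apply]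
  simp only [mul_diagonal, transpose_apply, vandermonde_apply]
  refine sum_congr rfl fun k _ => ?_
  ring

lemma prod_range_powMulPow :
    ∏ k ∈ range (r + 1), powMulPow a b r k = (a * b) ^ (r + 1).choose 2 := by
  rw [mul_pow]
  nth_rw 1 [← sum_range_succ_id_eq_choose_two]
  rw [← sum_range_succ_sub_eq_choose_two, ← prod_pow_eq_pow_sum, ← prod_pow_eq_pow_sum,
    ← prod_mul_distrib]
  rfl

lemma prod_diagonal_hankel (n : ℕ) :
    ∏ k : Fin (r + 1), (-1) ^ (r - k) * r.choose k * powMulPow a b r k ^ n =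
      (-1) ^ (r + 1).choose 2 * (a * b) ^ (n * (r + 1).choose 2) *
        ∏ k ∈ range (r + 1), (r.choose k : R) := by
  rw [Fin.prod_univ_eq_prod_range (fun k => (-1) ^ (r - k) * r.choose k * powMulPow a b r k ^ n)]
  simp only [prod_mul_distrib, prod_pow_eq_pow_sum, prod_pow, sum_range_succ_sub_eq_choose_two,
    prod_range_powMulPow]
  ring

lemma powMulPow_sub_powMulPow {i j : ℕ} (hij : i ≤ j) (hj : j ≤ r) :
    powMulPow a b r j - powMulPow a b r i = a ^ i * b ^ (r - j) * (a ^ (j - i) - b ^ (j - i)) := by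
  obtain ⟨d, rfl⟩ := Nat.exists_eq_add_of_le hij
  obtain ⟨e, rfl⟩ := Nat.exists_eq_add_of_le hj
  simp only [powMulPow, Nat.add_sub_cancel_left, show i + d + e - i = d + e by omega]
  ring

lemma det_vandermonde_powMulPow :
    det (vandermonde fun k : Fin (r + 1) => powMulPow a b r k) =
      (a * b) ^ (∑ k ∈ range (r + 1), k * (r - k)) *
        ∏ d ∈ Icc 1 r, (a ^ d - b ^ d) ^ (r + 1 - d) := by
  rw [det_vandermonde, prod_fin_Ioi_eq_prod_range_Ioc r
      (fun i j => powMulPow a b r j - powMulPow a b r i),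
    ← prod_range_prod_Ioc_sub r (fun d => a ^ d - b ^ d)]
  have factor : ∀ i ∈ range (r + 1), ∀ j ∈ Ioc i r, powMulPow a b r j - powMulPow a b r i =
      a ^ i * b ^ (r - j) * (a ^ (j - i) - b ^ (j - i)) := fun i _ j hj =>
    powMulPow_sub_powMulPow a b r (mem_Ioc.mp hj).1.le (mem_Ioc.mp hj).2
  rw [prod_congr rfl fun i hi => prod_congr rfl (factor i hi)]
  simp only [prod_mul_distrib, prod_range_prod_Ioc_left, prod_range_prod_Ioc_right]
  rw [← prod_pow_eq_pow_sum, ← prod_mul_distrib]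
  congr 1
  exact prod_congr rfl fun k _ => by ring

theorem det_hankel_pow_sub_pow (n : ℕ) :
    det (of fun i j : Fin (r + 1) => (a ^ (n + i + j) - b ^ (n + i + j)) ^ r) =
      (-1) ^ (r + 1).choose 2 * (a * b) ^ (n * (r + 1).choose 2) *
        ((a * b) ^ (∑ k ∈ range (r + 1), k * (r - k)) *
          ∏ d ∈ Icc 1 r, (a ^ d - b ^ d) ^ (r + 1 - d)) ^ 2 *
        ∏ k ∈ range (r + 1), (r.choose k : R) := by
  rw [hankel_pow_sub_pow_eq_mul, det_mul, det_mul, det_transpose, det_diagonal,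
    prod_diagonal_hankel, det_vandermonde_powMulPow]
  ring

end PowSubPow

theorem det_hankel_pow_of_mul_eq_pow_sub_pow {R : Type*} [CommRing R] [IsDomain R] {a b : R}
    (hab : a ≠ b) {f : ℕ → R} (hf : ∀ m, (a - b) * f m = a ^ m - b ^ m) (r n : ℕ) :
    det (of fun i j : Fin (r + 1) => f (n + i + j) ^ r) =
      (-1) ^ (r + 1).choose 2 * (a * b) ^ (n * (r + 1).choose 2) *
        ((a * b) ^ (∑ k ∈ range (r + 1), k * (r - k)) *
          ∏ d ∈ Icc 1 r, f d ^ (r + 1 - d)) ^ 2 *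
        ∏ k ∈ range (r + 1), (r.choose k : R) := by
  have hscale : (of fun i j : Fin (r + 1) => (a ^ (n + i + j) - b ^ (n + i + j)) ^ r) =
      (a - b) ^ r • of fun i j : Fin (r + 1) => f (n + i + j) ^ r := by
    ext i j
    simp [← hf, mul_pow]
  have hconst : ∏ d ∈ Icc 1 r, (a - b) ^ (r + 1 - d) = (a - b) ^ (r + 1).choose 2 := by
    rw [← prod_range_prod_Ioc_sub r (fun _ => a - b), prod_range_prod_Ioc_left,
      prod_pow_eq_pow_sum, sum_range_succ_sub_eq_choose_two]
  have htwice : r * (r + 1) = 2 * (r + 1).choose 2 := by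
    rw [Nat.choose_two_right, Nat.add_sub_cancel, mul_comm (r + 1)]
    exact (Nat.mul_div_cancel' (Nat.even_mul_succ_self r).two_dvd).symm
  have hprod : ∏ d ∈ Icc 1 r, (a ^ d - b ^ d) ^ (r + 1 - d) =
      (a - b) ^ (r + 1).choose 2 * ∏ d ∈ Icc 1 r, f d ^ (r + 1 - d) := by
    simp only [← hf, mul_pow, prod_mul_distrib, hconst]
  have key := det_hankel_pow_sub_pow a b r n
  rw [hscale, det_smul, Fintype.card_fin, ← pow_mul, htwice, hprod] at key
  -- both sides of `key` now carry the factor `(a - b) ^ (2 * C(r+1, 2))`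
  refine mul_left_cancel₀ (pow_ne_zero (2 * (r + 1).choose 2) (sub_ne_zero.mpr hab)) ?_
  rw [key]
  ring

open Real goldenRatio in
lemma goldenRatio_sub_goldenConj_mul_fib (m : ℕ) : (φ - ψ) * (Nat.fib m : ℝ) = φ ^ m - ψ ^ m := by
  rw [coe_fib_eq, goldenRatio_sub_goldenConj, mul_div_cancel₀ _ (by positivity)]

/-- Carlitz's formula (1): `det(F_{n+i+j}^r) = (−1)^{(n+1)C(r+1,2)} ·
(∏_{i=1}^{r} F_i^{r+1−i})² · ∏ᵢ C(r,i)`. -/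
theorem carlitz_det (r n : ℕ) :
    Matrix.det (Matrix.of fun i j : Fin (r + 1) =>
        (Nat.fib (n + (i : ℕ) + (j : ℕ)) : ℤ) ^ r) =
      (-1 : ℤ) ^ ((n + 1) * ((r + 1).choose 2)) *
      (∏ i ∈ Finset.Icc 1 r, (Nat.fib i : ℤ) ^ (r + 1 - i)) ^ 2 *
      ∏ i ∈ Finset.range (r + 1), (r.choose i : ℤ) := by
  apply Int.cast_injective (α := ℝ)
  have h := det_hankel_pow_of_mul_eq_pow_sub_pow
    (Real.goldenConj_neg.trans Real.goldenRatio_pos).ne'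
    goldenRatio_sub_goldenConj_mul_fib r n
  rw [Real.goldenRatio_mul_goldenConj] at h
  have hsq : ((-1 : ℝ) ^ ∑ k ∈ range (r + 1), k * (r - k)) ^ 2 = 1 := by
    rw [← pow_mul, (Nat.even_mul.mpr (Or.inr even_two)).neg_one_pow]
  rw [Int.cast_det]
  simp only [Matrix.map, of_apply]
  push_cast
  rw [h, mul_pow, hsq]
  ring
end

section
/- For every natural number n, the determinant of the 3×3 matrix with rows (F_n², F_{n+1}², F_{n+2}²), (F_{n+1}², F_{n+2}², F_{n+3}²), (F_{n+2}², F_{n+3}², F_{n+4}²) equals 2·(−1)^{n+1}. -/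
/-!
The squares `Fₖ²` satisfy `Fₖ₊₃² = 2Fₖ₊₂² + 2Fₖ₊₁² - Fₖ²`. For any sequence with
`aₖ₊₃ = p aₖ₊₂ + q aₖ₊₁ + r aₖ`, the bottom row of the `3 × 3` Hankel matrix `(aₙ₊₁₊ᵢ₊ⱼ)` is
`p`, `q`, `r` times the rows starting at `n + 2`, `n + 1`, `n`. The first two are already rows of
the matrix, and moving the third one to the top is an even permutation, so each shift of `n`
multiplies the Hankel determinant by `r = -1`. At `n = 0` the determinant is `-2`.
-/

open Matrix

def hankel3 {R : Type*} (a : ℕ → R) (n : ℕ) : Matrix (Fin 3) (Fin 3) R :=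
  of fun i j => a (n + i + j)

section LinearRecurrence

variable {R : Type*} [CommRing R] {a : ℕ → R} {p q r : R}

theorem det_hankel3_succ (ha : ∀ k, a (k + 3) = p * a (k + 2) + q * a (k + 1) + r * a k)
    (n : ℕ) : (hankel3 a (n + 1)).det = r * (hankel3 a n).det := by
  have h3 : a (n + 3) = p * a (n + 2) + q * a (n + 1) + r * a n := ha n
  have h4 : a (n + 4) = p * a (n + 3) + q * a (n + 2) + r * a (n + 1) := ha (n + 1)
  have h5 : a (n + 5) = p * a (n + 4) + q * a (n + 3) + r * a (n + 2) := ha (n + 2)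
  simp only [hankel3, det_fin_three, of_apply, Fin.isValue, Fin.val_zero, Fin.val_one,
    Fin.val_two, add_zero, add_assoc, Nat.reduceAdd]
  -- the coefficients are the cofactors of the bottom row of `hankel3 a (n + 1)`
  linear_combination (a (n + 2) * a (n + 4) - a (n + 3) ^ 2) * h3
    - (a (n + 1) * a (n + 4) - a (n + 2) * a (n + 3)) * h4
    + (a (n + 1) * a (n + 3) - a (n + 2) ^ 2) * h5

theorem det_hankel3 (ha : ∀ k, a (k + 3) = p * a (k + 2) + q * a (k + 1) + r * a k) (n : ℕ) :
    (hankel3 a n).det = r ^ n * (hankel3 a 0).det := by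
  induction n with
  | zero => rw [pow_zero, one_mul]
  | succ n ih => rw [det_hankel3_succ ha, ih, pow_succ', mul_assoc]

end LinearRecurrence

theorem fib_add_three_sq (k : ℕ) :
    (Nat.fib (k + 3) : ℤ) ^ 2 =
      2 * (Nat.fib (k + 2) : ℤ) ^ 2 + 2 * (Nat.fib (k + 1) : ℤ) ^ 2 + (-1) * (Nat.fib k : ℤ) ^ 2 := by
  have h2 : (Nat.fib (k + 2) : ℤ) = Nat.fib k + Nat.fib (k + 1) := by
    exact_mod_cast Nat.fib_add_two
  have h3 : (Nat.fib (k + 3) : ℤ) = Nat.fib (k + 1) + Nat.fib (k + 2) := by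
    exact_mod_cast Nat.fib_add_two
  rw [h3, h2]
  ring

/-- Alfred's problem: the determinant of the 3×3 matrix of consecutive squared
Fibonacci numbers equals `2·(−1)^{n+1}`. -/
theorem alfred_det (n : ℕ) :
    Matrix.det !![(Nat.fib n : ℤ) ^ 2, (Nat.fib (n + 1) : ℤ) ^ 2, (Nat.fib (n + 2) : ℤ) ^ 2;
        (Nat.fib (n + 1) : ℤ) ^ 2, (Nat.fib (n + 2) : ℤ) ^ 2, (Nat.fib (n + 3) : ℤ) ^ 2;
        (Nat.fib (n + 2) : ℤ) ^ 2, (Nat.fib (n + 3) : ℤ) ^ 2, (Nat.fib (n + 4) : ℤ) ^ 2] =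
      2 * (-1 : ℤ) ^ (n + 1) := by
  have base : (hankel3 (fun k => (Nat.fib k : ℤ) ^ 2) 0).det = -2 := by
    simp [hankel3, det_fin_three, Nat.fib_add_two]
  calc _ = (hankel3 (fun k => (Nat.fib k : ℤ) ^ 2) n).det := by
          congr 1
          ext i j
          fin_cases i <;> fin_cases j <;> rfl
    _ = (-1) ^ n * (hankel3 (fun k => (Nat.fib k : ℤ) ^ 2) 0).det :=
          det_hankel3 fib_add_three_sq n
    _ = 2 * (-1) ^ (n + 1) := by rw [base]; ring
end

section
/- Let r be a natural number and let X₀, …, X_r, D₁, …, D_r, and E₁, …, E_r be real numbers. Then the determinant of the (r+1)×(r+1) matrix whose (i,j) entry (0 ≤ i, j ≤ r) is ∏_{ℓ=j+1}^{r} (X_i + D_ℓ) · ∏_{m=1}^{j} (X_i + E_m) equals ∏_{0 ≤ i < j ≤ r} (X_j − X_i) · ∏_{1 ≤ i ≤ j ≤ r} (D_j − E_i). -/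
/-!
Each column of the matrix is a monic polynomial of degree `r` evaluated at the `X i`, so the
matrix is the Vandermonde matrix of `X` times the coefficient matrix of these column polynomials,
and only the determinant of the latter remains. Two consecutive column polynomials differ by
`E (j + 1) - D (j + 1)` times a column polynomial of degree one less, with `D` shifted by one.
Subtracting consecutive columns and expanding along the top-degree row therefore peels off the
factors `D j - E j` and reduces `r` by one.
-/

open Finset Polynomial

theorem Finset.prod_Icc_triangle_succ {M : Type*} [CommMonoid M] (f : ℕ → ℕ → M) (n : ℕ) :
    ∏ j ∈ Icc 1 (n + 1), ∏ i ∈ Icc 1 j, f i j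
      = (∏ j ∈ Icc 1 (n + 1), f j j) * ∏ j ∈ Icc 1 n, ∏ i ∈ Icc 1 j, f i (j + 1) := by
  induction n with
  | zero => simp
  | succ n ih =>
    rw [prod_Icc_succ_top (by omega : 1 ≤ n + 1 + 1), ih,
      prod_Icc_succ_top (by omega : 1 ≤ n + 1 + 1) (fun j => f j j),
      prod_Icc_succ_top (by omega : 1 ≤ n + 1) (fun j => ∏ i ∈ Icc 1 j, f i (j + 1)),
      prod_Icc_succ_top (by omega : 1 ≤ n + 1 + 1) (fun i => f i (n + 1 + 1))]
    ac_rfl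

theorem Fin.prod_univ_val_add_one_eq_prod_Icc {M : Type*} [CommMonoid M] (f : ℕ → M) (n : ℕ) :
    ∏ j : Fin n, f (j + 1) = ∏ j ∈ Icc 1 n, f j := by
  rw [Fin.prod_univ_eq_prod_range (fun j => f (j + 1)), ← Ico_add_one_right_eq_Icc,
    ← map_add_right_Ico 0 n 1, prod_map, range_eq_Ico]
  rfl

namespace Matrix

variable {R : Type*} [CommRing R]

theorem of_eval_eq_vandermonde_mul_of_coeff {n : ℕ} (v : Fin n → R) (p : Fin n → R[X])
    (h_deg : ∀ j, (p j).natDegree < n) :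
    of (fun i j => (p j).eval (v i)) = vandermonde v * of (fun i j : Fin n => (p j).coeff i) := by
  ext i j
  rw [of_apply, eval_eq_sum_range' (h_deg j), ← Fin.sum_univ_eq_sum_range, mul_apply]
  simp only [vandermonde_apply, of_apply, mul_comm]

/-- Replace each column but the first by its difference with the previous one, then expand along
the top-degree row, where only the leading coefficient of `p 0` is nonzero. -/
theorem det_of_coeff_eq_of_sub {n : ℕ} (p : Fin (n + 1) → R[X]) (q : Fin n → R[X])
    (hp_monic : (p 0).Monic) (hp_deg : (p 0).natDegree = n)
    (hq_deg : ∀ j, (q j).natDegree < n) (hpq : ∀ j, p j.succ - p j.castSucc = q j) :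
    (of fun i j : Fin (n + 1) => (p j).coeff i).det
      = (-1) ^ n * (of fun i j : Fin n => (q j).coeff i).det := by
  set B : Matrix (Fin (n + 1)) (Fin (n + 1)) R :=
    of fun i j => Fin.cases ((p 0).coeff i) (fun j => (q j).coeff i) j
  have h_colOp : (of fun i j : Fin (n + 1) => (p j).coeff i).det = B.det := by
    refine det_eq_of_forall_col_eq_smul_add_pred (fun _ => 1) (fun _ => rfl) fun i j => ?_
    simp [B, ← hpq j]
  have h_lastRow : ∀ j : Fin n, B (Fin.last n) j.succ = 0 := fun j =>
    coeff_eq_zero_of_natDegree_lt (hq_deg j)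
  have h_corner : B (Fin.last n) 0 = 1 := by
    simpa [B, leadingCoeff, hp_deg] using hp_monic.leadingCoeff
  have h_minor : B.submatrix Fin.castSucc Fin.succ = of fun i j : Fin n => (q j).coeff i := rfl
  rw [h_colOp, det_succ_row B (Fin.last n), Fin.sum_univ_succ]
  simp only [h_lastRow, mul_zero, zero_mul, sum_const_zero, add_zero, Fin.succAbove_last,
    Fin.succAbove_zero, h_corner, h_minor, Fin.val_last, Fin.val_zero, mul_one]

end Matrix

namespace Krattenthaler

variable {R : Type*} [CommRing R]

noncomputable def columnPoly (r : ℕ) (D E : ℕ → R) (j : ℕ) : R[X] :=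
  (∏ l ∈ Icc (j + 1) r, (X + C (D l))) * ∏ m ∈ Icc 1 j, (X + C (E m))

theorem eval_columnPoly (r : ℕ) (D E : ℕ → R) (j : ℕ) (x : R) :
    (columnPoly r D E j).eval x = (∏ l ∈ Icc (j + 1) r, (x + D l)) * ∏ m ∈ Icc 1 j, (x + E m) := by
  simp [columnPoly, eval_prod]

theorem monic_columnPoly (r : ℕ) (D E : ℕ → R) (j : ℕ) : (columnPoly r D E j).Monic :=
  (monic_prod_of_monic _ _ fun _ _ => monic_X_add_C _).mul
    (monic_prod_of_monic _ _ fun _ _ => monic_X_add_C _)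

theorem natDegree_columnPoly [Nontrivial R] (r : ℕ) (D E : ℕ → R) {j : ℕ} (hj : j ≤ r) :
    (columnPoly r D E j).natDegree = r := by
  rw [columnPoly, (monic_prod_of_monic _ _ fun _ _ => monic_X_add_C _).natDegree_mul
      (monic_prod_of_monic _ _ fun _ _ => monic_X_add_C _),
    natDegree_prod_of_monic _ _ fun _ _ => monic_X_add_C _,
    natDegree_prod_of_monic _ _ fun _ _ => monic_X_add_C _]
  simp only [natDegree_X_add_C, sum_const, Nat.card_Icc, smul_eq_mul, mul_one]
  omega

theorem columnPoly_succ_sub {r j : ℕ} (hj : j ≤ r) (D E : ℕ → R) :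
    columnPoly (r + 1) D E (j + 1) - columnPoly (r + 1) D E j
      = C (E (j + 1) - D (j + 1)) * columnPoly r (fun l => D (l + 1)) E j := by
  have h_shift : ∏ l ∈ Icc (j + 1) r, (X + C (D (l + 1)))
      = ∏ l ∈ Icc (j + 2) (r + 1), (X + C (D l)) := by
    rw [← map_add_right_Icc (j + 1) r 1, prod_map]; rfl
  rw [columnPoly, columnPoly, columnPoly, h_shift,
    prod_Icc_succ_top (by omega : 1 ≤ j + 1) (fun m => X + C (E m)),
    Icc_eq_cons_Ioc (by omega : j + 1 ≤ r + 1), prod_cons, ← Icc_add_one_left_eq_Ioc, C_sub]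
  ring

theorem det_of_coeff_columnPoly (r : ℕ) (D E : ℕ → R) :
    (Matrix.of fun i j : Fin (r + 1) => (columnPoly r D E j).coeff i).det
      = ∏ j ∈ Icc 1 r, ∏ i ∈ Icc 1 j, (D j - E i) := by
  induction r generalizing D with
  | zero => simp [columnPoly, Matrix.det_unique]
  | succ r ih =>
    nontriviality R
    set D' : ℕ → R := fun l => D (l + 1)
    have h_diff_deg : ∀ j : Fin (r + 1),
        (C (E (j + 1) - D (j + 1)) * columnPoly r D' E j).natDegree < r + 1 := fun j =>
      natDegree_C_mul_le _ _ |>.trans_lt <|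
        (natDegree_columnPoly r D' E j.is_le).trans_lt r.lt_succ_self
    have h_scale := Matrix.det_mul_row (fun j : Fin (r + 1) => E (j + 1) - D (j + 1))
      (Matrix.of fun i j : Fin (r + 1) => (columnPoly r D' E j).coeff i)
    simp only [Matrix.of_apply] at h_scale
    have h_sign : (-1) ^ (r + 1) * ∏ j : Fin (r + 1), (E (j + 1) - D (j + 1))
        = ∏ j ∈ Icc 1 (r + 1), (D j - E j) := by
      rw [Fin.prod_univ_val_add_one_eq_prod_Icc (fun j => E j - D j),
        ← prod_congr rfl fun j _ => neg_sub (D j) (E j), prod_neg, Nat.card_Icc,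
        Nat.add_sub_cancel, ← mul_assoc, ← pow_add, Even.neg_one_pow ⟨_, rfl⟩, one_mul]
    rw [Matrix.det_of_coeff_eq_of_sub (fun j => columnPoly (r + 1) D E j) _
        (monic_columnPoly _ _ _ _) (natDegree_columnPoly _ _ _ (Nat.zero_le _))
        h_diff_deg (fun j => columnPoly_succ_sub j.is_le D E)]
    simp only [coeff_C_mul]
    rw [h_scale, ih, prod_Icc_triangle_succ, ← mul_assoc, h_sign]

end Krattenthaler

/-- Lemma 8 (Krattenthaler):
`det(∏_{ℓ=j+1}^{r}(X_i+D_ℓ) · ∏_{m=1}^{j}(X_i+E_m))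
  = ∏_{i<j}(X_j−X_i) · ∏_{1≤i≤j≤r}(D_j−E_i)`. -/
theorem krattenthaler_det (r : ℕ) (X : Fin (r + 1) → ℝ) (D E : ℕ → ℝ) :
    Matrix.det (Matrix.of fun i j : Fin (r + 1) =>
        (∏ ℓ ∈ Finset.Icc ((j : ℕ) + 1) r, (X i + D ℓ)) *
        ∏ m ∈ Finset.Icc 1 (j : ℕ), (X i + E m)) =
      (∏ i : Fin (r + 1), ∏ j ∈ Finset.Ioi i, (X j - X i)) *
      ∏ j ∈ Finset.Icc 1 r, ∏ i ∈ Finset.Icc 1 j, (D j - E i) := by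
  simp_rw [← Krattenthaler.eval_columnPoly]
  rw [Matrix.of_eval_eq_vandermonde_mul_of_coeff X _
      (fun j => (Krattenthaler.natDegree_columnPoly r D E j.is_le).trans_lt r.lt_succ_self),
    Matrix.det_mul, Matrix.det_vandermonde, Krattenthaler.det_of_coeff_columnPoly]
end

section
/- Let r ≥ 0, s, and k be integers. Then the determinant of the (r+1)×(r+1) matrix whose (i,j) entry (0 ≤ i, j ≤ r) is F_{s+ik}^{r−j}·F_{s+(i+1)k}^{j} equals (−1)^{(s+1)·C(r+1,2) + k·C(r+1,3)} · F_k^{C(r+1,2)} · ∏_{ℓ=1}^{r} F_{kℓ}^{r+1−ℓ}. -/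
/-!
The matrix is the homogeneous Vandermonde matrix of the pairs `(F (s + i k), F (s + (i + 1) k))`,
so its determinant is the product over `i < j` of the 2 × 2 minors
`F (s + (j + 1) k) F (s + i k) - F (s + (i + 1) k) F (s + j k)`. By Vajda's identity
`F a F (b + c) - F b F (a + c) = (-1)^b F (a - b) F c` each minor is
`(-1)^(s + 1 + i k) F k F ((j - i) k)`. Collecting factors, the sign and `F k` occur with exponents
`∑ (r - i) = C(r+1, 2)` and `∑ i (r - i) = C(r+1, 3)`, and `F (ℓ k)` once for each of the
`r + 1 - ℓ` pairs with `j - i = ℓ`.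
-/

open Finset

lemma eq_negOnePow_mul_of_add_one {f : ℤ → ℤ} (hf : ∀ n, f (n + 1) = -f n) (n : ℤ) :
    f n = n.negOnePow * f 0 := by
  induction n using Int.induction_on with
  | zero => simp
  | succ m ih => rw [hf, ih, Int.negOnePow_succ]; push_cast; ring
  | pred m ih =>
    have h := hf (-m - 1)
    rw [sub_add_cancel] at h
    rw [Int.negOnePow_sub, Int.negOnePow_one, Units.val_mul]
    push_cast
    linear_combination h - ih

def IsFibLike (G : ℤ → ℤ) : Prop := ∀ n, G (n + 2) = G (n + 1) + G n

namespace IsFibLike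

variable {F G H : ℤ → ℤ}

lemma of_eq_sub_add_sub (hG : ∀ n, G n = G (n - 1) + G (n - 2)) : IsFibLike G := fun n => by
  simpa [add_sub_assoc] using hG (n + 2)

lemma comp_add_const (hG : IsFibLike G) (c : ℤ) : IsFibLike fun n => G (n + c) := fun n => by
  simpa only [add_right_comm] using hG (n + c)

lemma eq_of_eq_of_eq_add_one (hG : IsFibLike G) (hH : IsFibLike H) (t : ℤ) (h₀ : G t = H t)
    (h₁ : G (t + 1) = H (t + 1)) : G = H := by
  suffices ∀ m : ℤ, G (t + m) = H (t + m) ∧ G (t + m + 1) = H (t + m + 1) from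
    funext fun n => by simpa using (this (n - t)).1
  intro m
  induction m using Int.induction_on with
  | zero => simpa using ⟨h₀, h₁⟩
  | succ m ih =>
    have hG' := hG (t + m)
    have hH' := hH (t + m)
    refine ⟨by simpa [add_assoc] using ih.2, ?_⟩
    rw [show t + (m + 1) + 1 = t + m + 2 by ring]
    omega
  | pred m ih =>
    have hG' := hG (t + (-m - 1))
    have hH' := hH (t + (-m - 1))
    rw [show t + (-m - 1) + 2 = t + -m + 1 by ring,
      show t + (-m - 1) + 1 = t + -m by ring] at hG' hH'
    exact ⟨by omega, by rw [show t + (-m - 1) + 1 = t + -m by ring]; exact ih.1⟩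

lemma casoratian_eq (hG : IsFibLike G) (hH : IsFibLike H) (n : ℤ) :
    G n * H (n + 1) - G (n + 1) * H n = n.negOnePow * (G 0 * H 1 - G 1 * H 0) := by
  refine eq_negOnePow_mul_of_add_one (f := fun n => G n * H (n + 1) - G (n + 1) * H n)
    (fun n => ?_) n
  simp only [add_assoc, one_add_one_eq_two, hG n, hH n]
  ring

/-- Both sides solve the recurrence in `a`; they agree at `a = b` since `F 0 = 0`, and at
`a = b + 1` by the Casoratian of `F` and `F (· + c)`. -/
lemma vajda (hF : IsFibLike F) (hF0 : F 0 = 0) (hF1 : F 1 = 1) (a b c : ℤ) :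
    F a * F (b + c) - F b * F (a + c) = b.negOnePow * (F (a - b) * F c) := by
  refine congrFun (eq_of_eq_of_eq_add_one (G := fun a => F a * F (b + c) - F b * F (a + c))
    (H := fun a => b.negOnePow * (F (a - b) * F c)) ?_ ?_ b ?_ ?_) a
  · intro n
    simp only [hF n, add_right_comm n 2 c, add_right_comm n 1 c, hF (n + c)]
    ring
  · intro n
    simp only [add_sub_right_comm n 2 b, add_sub_right_comm n 1 b, hF (n - b)]
    ring
  · simp [hF0]
  · have h := hF.casoratian_eq (hF.comp_add_const c) b
    simp only [zero_add, hF0, hF1, add_right_comm b 1 c] at h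
    simp only [add_sub_cancel_left, hF1, add_right_comm b 1 c]
    linear_combination -h

lemma vajda_arith (hF : IsFibLike F) (hF0 : F 0 = 0) (hF1 : F 1 = 1) (s k i j : ℤ) :
    F (s + (j + 1) * k) * F (s + i * k) - F (s + (i + 1) * k) * F (s + j * k) =
      (s + 1 + i * k).negOnePow * (F k * F (k * (j - i))) := by
  have h := hF.vajda hF0 hF1 (s + j * k) (s + i * k) k
  rw [show s + 1 + i * k = s + i * k + 1 by ring, Int.negOnePow_succ, Units.val_neg,
    show k * (j - i) = s + j * k - (s + i * k) by ring, add_one_mul, add_one_mul,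
    ← add_assoc, ← add_assoc]
  linear_combination -h

end IsFibLike

lemma sum_range_sub_eq_choose_two (r : ℕ) :
    ∑ i ∈ range (r + 1), (r - i) = (r + 1).choose 2 := by
  have h := sum_range_reflect (fun i => i) (r + 1)
  rw [add_tsub_cancel_right] at h
  rw [h, sum_range_id, Nat.choose_two_right]

lemma sum_range_mul_sub_eq_choose_three (r : ℕ) :
    ∑ i ∈ range (r + 1), i * (r - i) = (r + 1).choose 3 := by
  induction r with
  | zero => rfl
  | succ r ih =>
    have h : ∀ i ∈ range (r + 1), i * (r + 1 - i) = i * (r - i) + i := fun i hi => by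
      rw [mem_range] at hi
      rw [Nat.sub_add_comm (by omega), mul_add_one]
    rw [sum_range_succ, Nat.sub_self, mul_zero, add_zero, sum_congr rfl h, sum_add_distrib, ih,
      sum_range_id, ← Nat.choose_two_right, Nat.choose_succ_succ' (r + 1) 2, add_comm]

section Products

variable {M : Type*} [CommMonoid M]

lemma prod_Ioi_sub (r : ℕ) (g : ℕ → M) :
    ∏ i : Fin (r + 1), ∏ j ∈ Ioi i, g (j - i) = ∏ ℓ ∈ Icc 1 r, g ℓ ^ (r + 1 - ℓ) := by
  have inner (i : Fin (r + 1)) : ∏ j ∈ Ioi i, g (j - i) = ∏ ℓ ∈ Icc 1 (r - i), g ℓ :=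
    calc ∏ j ∈ Ioi i, g (j - i) = ∏ m ∈ (Ioi i).map Fin.valEmbedding, g (m - i) := by
          rw [prod_map]; rfl
      _ = ∏ m ∈ Ioo (i : ℕ) (r + 1), g (m - i) := by rw [Fin.map_valEmbedding_Ioi]
      _ = ∏ ℓ ∈ Icc 1 (r - i), g ℓ :=
          prod_nbij' (· - i) (· + i) (by simp; omega) (by simp; omega) (by simp; omega)
            (by simp) (fun _ _ => rfl)
  calc ∏ i : Fin (r + 1), ∏ j ∈ Ioi i, g (j - i)
      = ∏ i ∈ range (r + 1), ∏ ℓ ∈ Icc 1 (r - i), g ℓ := by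
        simp only [inner]
        exact Fin.prod_univ_eq_prod_range (fun i => ∏ ℓ ∈ Icc 1 (r - i), g ℓ) _
    _ = ∏ ℓ ∈ Icc 1 r, ∏ _i ∈ range (r + 1 - ℓ), g ℓ :=
        prod_comm' fun i ℓ => by simp only [mem_range, mem_Icc]; omega
    _ = ∏ ℓ ∈ Icc 1 r, g ℓ ^ (r + 1 - ℓ) := by simp only [prod_const, card_range]

lemma prod_Ioi_mul_pow_mul (r : ℕ) (a b : M) (g : ℕ → M) :
    ∏ i : Fin (r + 1), ∏ j ∈ Ioi i, a * b ^ (i : ℕ) * g (j - i) =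
      a ^ (r + 1).choose 2 * b ^ (r + 1).choose 3 * ∏ ℓ ∈ Icc 1 r, g ℓ ^ (r + 1 - ℓ) := by
  simp only [prod_mul_distrib, prod_const, Fin.card_Ioi, add_tsub_cancel_right, prod_Ioi_sub,
    ← pow_mul, prod_pow_eq_pow_sum]
  rw [Fin.sum_univ_eq_sum_range (fun i => r - i), sum_range_sub_eq_choose_two,
    Fin.sum_univ_eq_sum_range (fun i => i * (r - i)), sum_range_mul_sub_eq_choose_three]

end Products

/-- Corollary 10 (Alfred's basic power determinant):
`det(F_{s+ik}^{r−j}·F_{s+(i+1)k}^{j})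
  = (−1)^{(s+1)C(r+1,2)+kC(r+1,3)} · F_k^{C(r+1,2)} · ∏_{ℓ=1}^{r} F_{kℓ}^{r+1−ℓ}`
for the Fibonacci numbers extended to all integers. -/
theorem basic_power_determinant (F : ℤ → ℤ)
    (hF0 : F 0 = 0) (hF1 : F 1 = 1)
    (hF : ∀ n : ℤ, F n = F (n - 1) + F (n - 2))
    (r : ℕ) (s k : ℤ) :
    Matrix.det (Matrix.of fun i j : Fin (r + 1) =>
        F (s + (i : ℤ) * k) ^ (r - (j : ℕ)) * F (s + ((i : ℤ) + 1) * k) ^ (j : ℕ)) =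
      ((-1 : ℤˣ) ^ ((s + 1) * ((r + 1).choose 2 : ℤ) + k * ((r + 1).choose 3 : ℤ)) : ℤˣ) *
      F k ^ ((r + 1).choose 2) *
      ∏ ℓ ∈ Finset.Icc 1 r, F (k * (ℓ : ℤ)) ^ (r + 1 - ℓ) := by
  have hrec := IsFibLike.of_eq_sub_add_sub hF
  obtain ⟨u, hu⟩ : ∃ u : ℤ, u = (((-1 : ℤˣ) ^ (s + 1) : ℤˣ) : ℤ) := ⟨_, rfl⟩
  obtain ⟨v, hv⟩ : ∃ v : ℤ, v = (((-1 : ℤˣ) ^ k : ℤˣ) : ℤ) := ⟨_, rfl⟩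
  have hmat : (Matrix.of fun i j : Fin (r + 1) =>
      F (s + (i : ℤ) * k) ^ (r - (j : ℕ)) * F (s + ((i : ℤ) + 1) * k) ^ (j : ℕ)) =
      Matrix.projVandermonde (fun i => F (s + ((i : ℤ) + 1) * k))
        (fun i => F (s + (i : ℤ) * k)) := by
    ext i j
    rw [Matrix.projVandermonde_apply, Fin.val_rev, Matrix.of_apply, mul_comm]
    congr 2
    omega
  have hminor (i j : Fin (r + 1)) (hij : i < j) :
      F (s + ((j : ℤ) + 1) * k) * F (s + (i : ℤ) * k) -
          F (s + ((i : ℤ) + 1) * k) * F (s + (j : ℤ) * k) =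
        u * F k * v ^ (i : ℕ) * F (k * ((j - i : ℕ) : ℤ)) := by
    rw [hrec.vajda_arith hF0 hF1, Int.negOnePow_def, zpow_add, mul_comm _ k, zpow_mul, zpow_natCast,
      Units.val_mul, Units.val_pow_eq_pow_val, Nat.cast_sub (Fin.lt_def.1 hij).le, hu, hv]
    ring
  have hsign :
      (((-1 : ℤˣ) ^ ((s + 1) * ((r + 1).choose 2 : ℤ) + k * ((r + 1).choose 3 : ℤ)) : ℤˣ) : ℤ) =
        u ^ (r + 1).choose 2 * v ^ (r + 1).choose 3 := by
    rw [zpow_add, zpow_mul, zpow_mul, zpow_natCast, zpow_natCast, Units.val_mul,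
      Units.val_pow_eq_pow_val, Units.val_pow_eq_pow_val, hu, hv]
  rw [hmat, Matrix.det_projVandermonde,
    prod_congr rfl fun i _ => prod_congr rfl fun j hj => hminor i j (mem_Ioi.1 hj),
    prod_Ioi_mul_pow_mul r _ _ fun ℓ => F (k * (ℓ : ℤ)), hsign]
  ring
end
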